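/- The series ∑_{m=1}^∞ (-1)^{m-1} / (m² · C(2m, m)) converges and equals 2 · (log((√5 + 1)/2))². -/

import Mathlib

/-!
Expanding `log (1 + u)` at `u = t (1 - t)` and integrating termwise, the Beta integrals
`∫₀¹ tᵐ (1 - t)ᵐ⁺¹ dt = 1 / ((m + 1) C(2m + 2, m + 1))` turn the series into `K 1`, where
`K x = ∫₀¹ log (1 + x t (1 - t)) / t dt`. Differentiating under the integral sign, `K' x` is the
integral of a rational function, which partial fractions evaluate to
`2 arsinh (√x / 2) / √(x (x + 4))`: the derivative of `2 arsinh (√x / 2)²`. Both functions vanish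
at `0`, so `K 1 = 2 arsinh (1 / 2)² = 2 log ((√5 + 1) / 2)²`.
-/

open Real Set Filter MeasureTheory Interval Metric
open scoped Nat

theorem integral_pow_mul_one_sub_pow (m n : ℕ) :
    ∫ t in (0:ℝ)..1, t ^ m * (1 - t) ^ n = (m ! * n ! : ℝ) / (m + n + 1)! := by
  have h := Complex.betaIntegral_eq_Gamma_mul_div (m + 1) (n + 1)
    (by norm_cast; omega) (by norm_cast; omega)
  simp only [Complex.betaIntegral, add_sub_cancel_right, Complex.cpow_natCast] at h
  rw [show (m + 1 + (n + 1) : ℂ) = ((m + n + 1 : ℕ) : ℂ) + 1 by push_cast; ring,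
    Complex.Gamma_nat_eq_factorial, Complex.Gamma_nat_eq_factorial,
    Complex.Gamma_nat_eq_factorial] at h
  apply Complex.ofReal_injective
  push_cast [← intervalIntegral.integral_ofReal]
  exact h

theorem integral_pow_mul_one_sub_pow_succ (m : ℕ) :
    ∫ t in (0:ℝ)..1, t ^ m * (1 - t) ^ (m + 1)
      = 1 / ((m + 1) * (2 * (m + 1)).choose (m + 1)) := by
  rw [integral_pow_mul_one_sub_pow, Nat.cast_choose ℝ (by omega : m + 1 ≤ 2 * (m + 1)),
    show 2 * (m + 1) - (m + 1) = m + 1 by omega, show m + (m + 1) + 1 = 2 * (m + 1) by ring,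
    Nat.factorial_succ m]
  push_cast
  field_simp

theorem hasSum_log_one_add_of_abs_lt_one {u : ℝ} (hu : |u| < 1) :
    HasSum (fun m : ℕ => (-1) ^ m * u ^ (m + 1) / (m + 1)) (log (1 + u)) := by
  have h := (hasSum_pow_div_log_of_abs_lt_one (x := -u) (by rwa [abs_neg])).neg
  rw [neg_neg, sub_neg_eq_add] at h
  refine h.congr_fun fun m => ?_
  rw [neg_pow, pow_succ]
  ring

theorem hasSum_log_one_add_mul_one_sub_div {t : ℝ} (ht : t ∈ Ioc 0 1) :
    HasSum (fun m : ℕ => (-1) ^ m * (t ^ m * (1 - t) ^ (m + 1)) / (m + 1))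
      (log (1 + t * (1 - t)) / t) := by
  obtain ⟨ht0, ht1⟩ := ht
  have h := (hasSum_log_one_add_of_abs_lt_one (u := t * (1 - t))
    (by rw [abs_lt]; constructor <;> nlinarith)).div_const t
  refine h.congr_fun fun m => ?_
  rw [mul_pow, pow_succ t]
  field_simp

theorem norm_pow_mul_one_sub_pow_succ_div_le {t : ℝ} (ht : t ∈ Ioc 0 1) (m : ℕ) :
    ‖(-1) ^ m * (t ^ m * (1 - t) ^ (m + 1)) / (m + 1)‖ ≤ (1 / 4 : ℝ) ^ m := by
  obtain ⟨ht0, ht1⟩ := ht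
  have h1t : 0 ≤ 1 - t := by linarith
  have hprod : t ^ m * (1 - t) ^ (m + 1) ≤ (1 / 4) ^ m := calc
    t ^ m * (1 - t) ^ (m + 1) = (t * (1 - t)) ^ m * (1 - t) := by rw [pow_succ, mul_pow]; ring
    _ ≤ (1 / 4) ^ m * 1 := by
      gcongr
      · nlinarith [sq_nonneg (t - 1 / 2)]
      · linarith
    _ = (1 / 4) ^ m := mul_one _
  rw [norm_eq_abs, abs_div, abs_mul, abs_pow, abs_neg, abs_one, one_pow, one_mul,
    abs_of_nonneg (by positivity), abs_of_pos (by positivity)]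
  exact (_root_.div_le_self (by positivity) (by simp)).trans hprod

theorem hasSum_integral_log_one_add_mul_one_sub_div :
    HasSum (fun m : ℕ => (-1 : ℝ) ^ m / ((m + 1) ^ 2 * (2 * (m + 1)).choose (m + 1)))
      (∫ t in (0:ℝ)..1, log (1 + t * (1 - t)) / t) := by
  have hIoc : Ι (0:ℝ) 1 = Ioc 0 1 := uIoc_of_le zero_le_one
  have h := intervalIntegral.hasSum_integral_of_dominated_convergence
    (μ := volume) (F := fun (m : ℕ) (t : ℝ) => (-1) ^ m * (t ^ m * (1 - t) ^ (m + 1)) / (m + 1))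
    (fun m _ => (1 / 4 : ℝ) ^ m) (fun m => by fun_prop)
    (fun m => .of_forall fun t ht => norm_pow_mul_one_sub_pow_succ_div_le (hIoc ▸ ht) m)
    (.of_forall fun _ _ => summable_geometric_of_lt_one (by norm_num) (by norm_num))
    intervalIntegrable_const
    (.of_forall fun t ht => hasSum_log_one_add_mul_one_sub_div (hIoc ▸ ht))
  refine h.congr_fun fun m => ?_
  rw [intervalIntegral.integral_div, intervalIntegral.integral_const_mul,
    integral_pow_mul_one_sub_pow_succ]
  field_simp

noncomputable def logOneAddIntegral (x : ℝ) : ℝ :=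
  ∫ t in (0:ℝ)..1, log (1 + x * (t * (1 - t))) / t

@[simp]
theorem logOneAddIntegral_zero : logOneAddIntegral 0 = 0 := by
  simp [logOneAddIntegral]

theorem half_le_one_add_mul {x t : ℝ} (hx : -1 / 4 < x) (ht : t ∈ Icc 0 1) :
    1 / 2 ≤ 1 + x * (t * (1 - t)) := by
  obtain ⟨ht0, ht1⟩ := ht
  have hu : 0 ≤ t * (1 - t) := mul_nonneg ht0 (by linarith)
  nlinarith [mul_nonneg (by linarith : 0 ≤ x + 1 / 4) hu, sq_nonneg (t - 1 / 2)]

theorem norm_log_one_add_mul_div_le {a t : ℝ} (ha : 0 ≤ a) (ht : t ∈ Ioc 0 1) :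
    ‖log (1 + a * (t * (1 - t))) / t‖ ≤ a := by
  obtain ⟨ht0, ht1⟩ := ht
  have hu : 0 ≤ a * (t * (1 - t)) := mul_nonneg ha (mul_nonneg ht0.le (by linarith))
  have hlog : log (1 + a * (t * (1 - t))) ≤ a * (t * (1 - t)) := by
    linarith [log_le_sub_one_of_pos (by linarith : 0 < 1 + a * (t * (1 - t)))]
  rw [norm_div, norm_of_nonneg (log_nonneg (by linarith)), norm_of_nonneg ht0.le,
    div_le_iff₀ ht0]
  nlinarith [mul_nonneg (mul_nonneg ha ht0.le) ht0.le]

theorem hasDerivAt_log_one_add_mul_div {x t : ℝ} (ht : t ≠ 0)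
    (hpos : 0 < 1 + x * (t * (1 - t))) :
    HasDerivAt (fun x => log (1 + x * (t * (1 - t))) / t)
      ((1 - t) / (1 + x * (t * (1 - t)))) x := by
  have hlin : HasDerivAt (fun x => 1 + x * (t * (1 - t))) (t * (1 - t)) x := by
    simpa using ((hasDerivAt_id x).mul_const (t * (1 - t))).const_add 1
  refine ((hlin.log hpos.ne').div_const t).congr_deriv ?_
  field_simp

theorem hasDerivAt_logOneAddIntegral {a : ℝ} (ha : 0 ≤ a) :
    HasDerivAt logOneAddIntegral (∫ t in (0:ℝ)..1, (1 - t) / (1 + a * (t * (1 - t)))) a := by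
  have hIoc : Ι (0:ℝ) 1 = Ioc 0 1 := uIoc_of_le zero_le_one
  have hden : ∀ x ∈ ball a (1 / 4), ∀ t ∈ Ioc (0:ℝ) 1, 1 / 2 ≤ 1 + x * (t * (1 - t)) :=
    fun x hx t ht => half_le_one_add_mul
      (by rw [mem_ball, Real.dist_eq, abs_lt] at hx; linarith) (Ioc_subset_Icc_self ht)
  refine (intervalIntegral.hasDerivAt_integral_of_dominated_loc_of_deriv_le
    (μ := volume) (F := fun x t => log (1 + x * (t * (1 - t))) / t)
    (F' := fun x t => (1 - t) / (1 + x * (t * (1 - t)))) (bound := fun _ => 2)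
    (ball_mem_nhds a (by norm_num : (0:ℝ) < 1 / 4))
    (.of_forall fun x => (by fun_prop : Measurable _).aestronglyMeasurable) ?_
    (by fun_prop : Measurable _).aestronglyMeasurable ?_ intervalIntegrable_const ?_).2
  · refine (intervalIntegrable_const (c := a)).mono_fun'
      (by fun_prop : Measurable _).aestronglyMeasurable ?_
    rw [hIoc, EventuallyLE, ae_restrict_iff' measurableSet_Ioc]
    exact .of_forall fun t ht => norm_log_one_add_mul_div_le ha ht
  · refine .of_forall fun t ht x hx => ?_
    rw [hIoc] at ht
    have h1 := hden x hx t ht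
    rw [norm_div, norm_of_nonneg (by linarith [ht.2]), norm_of_nonneg (by linarith),
      div_le_iff₀ (by linarith)]
    linarith [ht.1]
  · exact .of_forall fun t ht x hx => hasDerivAt_log_one_add_mul_div
      (hIoc ▸ ht).1.ne' (by linarith [hden x hx t (hIoc ▸ ht)])

theorem integral_one_sub_div_one_add_mul {a d : ℝ} (ha : 0 < a) (hd : 0 < d)
    (hd2 : d ^ 2 = a * (a + 4)) :
    ∫ t in (0:ℝ)..1, (1 - t) / (1 + a * (t * (1 - t))) = (log (d + a) - log (d - a)) / d := by
  have had : a < d := by nlinarith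
  have hderiv : ∀ t ∈ [[(0:ℝ), 1]], HasDerivAt
      (fun t => (log (d + a * (2 * t - 1)) - log (d - a * (2 * t - 1))) / (2 * d)
        + log (1 + a * (t * (1 - t))) / (2 * a))
      ((1 - t) / (1 + a * (t * (1 - t)))) t := by
    intro t ht
    rw [uIcc_of_le zero_le_one] at ht
    obtain ⟨ht0, ht1⟩ := ht
    have hs : |a * (2 * t - 1)| ≤ a := by
      rw [abs_mul, abs_of_pos ha]
      exact mul_le_of_le_one_right ha.le (abs_le.mpr ⟨by linarith, by linarith⟩)
    have hP : 0 < d + a * (2 * t - 1) := by linarith [neg_abs_le (a * (2 * t - 1))]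
    have hQ : 0 < d - a * (2 * t - 1) := by linarith [le_abs_self (a * (2 * t - 1))]
    have hR : 0 < 1 + a * (t * (1 - t)) := by nlinarith
    have hs' : HasDerivAt (fun t => a * (2 * t - 1)) (2 * a) t := by
      simpa [mul_comm] using (((hasDerivAt_id t).const_mul 2).sub_const 1).const_mul a
    have hu : HasDerivAt (fun t => 1 + a * (t * (1 - t))) (a * (1 - 2 * t)) t := by
      refine ((((hasDerivAt_id' t).mul ((hasDerivAt_id' t).const_sub 1)).const_mul a).const_add 1
        ).congr_deriv ?_
      ring
    refine (((((hs'.const_add d).log hP.ne').sub ((hs'.const_sub d).log hQ.ne')).div_const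
      (2 * d)).add ((hu.log hR.ne').div_const (2 * a))).congr_deriv ?_
    have hfact : (d + a * (2 * t - 1)) * (d - a * (2 * t - 1))
        = 4 * a * (1 + a * (t * (1 - t))) := by
      linear_combination hd2
    field_simp
    linear_combination (-d) * hfact
  have hint : IntervalIntegrable (fun t => (1 - t) / (1 + a * (t * (1 - t)))) volume 0 1 := by
    refine ContinuousOn.intervalIntegrable (ContinuousOn.div (by fun_prop) (by fun_prop) ?_)
    rw [uIcc_of_le zero_le_one]
    exact fun t ht => (half_le_one_add_mul (by linarith) ht |>.trans_lt' (by norm_num)).ne'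
  rw [intervalIntegral.integral_eq_sub_of_hasDerivAt hderiv hint]
  norm_num [← sub_eq_add_neg]
  ring

theorem sqrt_one_add_sqrt_div_two_sq {a : ℝ} (ha : 0 ≤ a) :
    √(1 + (√a / 2) ^ 2) = √(a + 4) / 2 := by
  rw [div_pow, sq_sqrt ha, show 1 + a / 2 ^ 2 = (√(a + 4) / 2) ^ 2 by
      rw [div_pow, sq_sqrt (by linarith)]; ring, sqrt_sq (by positivity)]

theorem two_mul_arsinh_sqrt_div_two {a : ℝ} (ha : 0 < a) :
    2 * arsinh (√a / 2) = log (√(a * (a + 4)) + a) - log (√(a * (a + 4)) - a) := by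
  have hr : √a ^ 2 = a := sq_sqrt ha.le
  have hq : √(a + 4) ^ 2 = a + 4 := sq_sqrt (by linarith)
  have hrq : √(a * (a + 4)) = √a * √(a + 4) := sqrt_mul ha.le _
  have hlt : a < √(a * (a + 4)) := by
    rw [hrq]; nlinarith [sqrt_pos.mpr ha, sqrt_pos.mpr (by linarith : 0 < a + 4)]
  rw [arsinh, sqrt_one_add_sqrt_div_two_sq ha.le, ← log_rpow (by positivity),
    ← log_div (by positivity) (by linarith)]
  congr 1
  rw [eq_div_iff (by linarith), hrq]
  norm_cast
  nlinarith

theorem hasDerivAt_two_mul_arsinh_sqrt_div_two_sq {a : ℝ} (ha : 0 < a) :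
    HasDerivAt (fun x => 2 * arsinh (√x / 2) ^ 2)
      (2 * arsinh (√a / 2) / √(a * (a + 4))) a := by
  refine ((((hasDerivAt_sqrt ha.ne').div_const 2).arsinh.pow 2).const_mul 2).congr_deriv ?_
  rw [sqrt_one_add_sqrt_div_two_sq ha.le, sqrt_mul ha.le]
  simp only [smul_eq_mul, Nat.cast_ofNat]
  field_simp
  ring

theorem logOneAddIntegral_eq_two_mul_arsinh_sq {x : ℝ} (hx : 0 ≤ x) :
    logOneAddIntegral x = 2 * arsinh (√x / 2) ^ 2 := by
  rcases hx.eq_or_lt with rfl | hx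
  · simp
  have hderiv : ∀ c ∈ Ioo 0 x, HasDerivAt
      (fun x => logOneAddIntegral x - 2 * arsinh (√x / 2) ^ 2) 0 c := by
    intro c hc
    have hd : 0 < √(c * (c + 4)) := sqrt_pos.mpr (by nlinarith [hc.1])
    have h := (hasDerivAt_logOneAddIntegral hc.1.le).sub
      (hasDerivAt_two_mul_arsinh_sqrt_div_two_sq hc.1)
    rwa [integral_one_sub_div_one_add_mul hc.1 hd (sq_sqrt (by nlinarith [hc.1])),
      ← two_mul_arsinh_sqrt_div_two hc.1, sub_self] at h
  have hcont : ContinuousOn (fun x => logOneAddIntegral x - 2 * arsinh (√x / 2) ^ 2) (Icc 0 x) :=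
    fun c hc => ((hasDerivAt_logOneAddIntegral hc.1).continuousAt.sub
      (by fun_prop)).continuousWithinAt
  obtain ⟨c, -, hc⟩ := exists_hasDerivAt_eq_slope _ _ hx hcont hderiv
  rw [logOneAddIntegral_zero, sqrt_zero, zero_div, arsinh_zero, eq_comm, div_eq_zero_iff] at hc
  rcases hc with hc | hc <;> linarith

/-- ∑_{m=1}^∞ (-1)^{m-1} / (m² · C(2m, m)) converges and equals 2·(log((√5+1)/2))². -/
theorem lehmer_corrected_p453b :
    HasSum (fun m : ℕ =>
      (-1 : ℝ) ^ m / ((m + 1 : ℝ) ^ 2 * (Nat.choose (2 * (m + 1)) (m + 1) : ℝ)))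
      (2 * (Real.log ((Real.sqrt 5 + 1) / 2)) ^ 2) := by
  have hphi : arsinh (√1 / 2) = log ((√5 + 1) / 2) := by
    rw [arsinh, sqrt_one_add_sqrt_div_two_sq zero_le_one, sqrt_one]
    norm_num
    ring_nf
  have hK : ∫ t in (0:ℝ)..1, log (1 + t * (1 - t)) / t = logOneAddIntegral 1 := by
    simp only [logOneAddIntegral, one_mul]
  have h := hasSum_integral_log_one_add_mul_one_sub_div
  rwa [hK, logOneAddIntegral_eq_two_mul_arsinh_sq zero_le_one, hphi] at h
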